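/- arXiv:math/0502435 — 2 statements merged into one kernel-verified Lean document; each statement's English description precedes it below -/
import Mathlib

section
/- Let V be a representing function on the unit disk 𝔻, identically zero outside the disk {|ζ| < r} for some r < 1. Then V(ζ) ≤ log⁺(r/|ζ|) for all ζ ∈ 𝔻 \ {0}. -/
open MeasureTheory Metric Real Set

noncomputable section

/-- A real-valued function is harmonic on `G` if it is continuous on `G` and satisfies
the mean value equality over every circle whose closed disk lies in `G`. -/
def HarmonicOn (h : ℂ → ℝ) (G : Set ℂ) : Prop :=
  ContinuousOn h G ∧ ∀ z ∈ G, ∀ r : ℝ, 0 < r → closedBall z r ⊆ G →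
    h z = (2 * π)⁻¹ * ∫ θ in (0:ℝ)..(2 * π), h (circleMap z r θ)

/-- A real-valued function is subharmonic on `G` if it is upper semicontinuous on `G` and
satisfies the sub-mean value inequality over every circle whose closed disk lies in `G`. -/
def SubharmonicOn (u : ℂ → ℝ) (G : Set ℂ) : Prop :=
  UpperSemicontinuousOn u G ∧ ∀ z ∈ G, ∀ r : ℝ, 0 < r → closedBall z r ⊆ G →
    u z ≤ (2 * π)⁻¹ * ∫ θ in (0:ℝ)..(2 * π), u (circleMap z r θ)

/-- The (finite positive) measure `μ` is compactly supported inside `G`. -/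
def HasCompactSupportIn (μ : Measure ℂ) (G : Set ℂ) : Prop :=
  ∃ K : Set ℂ, IsCompact K ∧ K ⊆ G ∧ μ Kᶜ = 0

/-- Representing measure on `G` (with respect to harmonic functions). -/
def IsRepresentingMeasure (μ : Measure ℂ) (G : Set ℂ) : Prop :=
  IsFiniteMeasure μ ∧ HasCompactSupportIn μ G ∧
    ∀ h : ℂ → ℝ, HarmonicOn h G → h 0 = ∫ z, h z ∂μ

/-- Jensen measure on `G` (with respect to subharmonic functions). -/
def IsJensenMeasure (μ : Measure ℂ) (G : Set ℂ) : Prop :=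
  IsFiniteMeasure μ ∧ HasCompactSupportIn μ G ∧
    ∀ u : ℂ → ℝ, SubharmonicOn u G → u 0 ≤ ∫ z, u z ∂μ

/-- Representing function on `G`. -/
def IsRepresentingFunction (V : ℂ → ℝ) (G : Set ℂ) : Prop :=
  SubharmonicOn V (G \ {0}) ∧
  (∃ K : Set ℂ, IsCompact K ∧ K ⊆ G ∧ ∀ z ∈ G \ K, V z = 0) ∧
  (∃ C r : ℝ, 0 < r ∧ ∀ z : ℂ, z ≠ 0 → ‖z‖ < r → V z ≤ -Real.log ‖z‖ + C)

/-- Jensen function on `G`. -/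
def IsJensenFunction (V : ℂ → ℝ) (G : Set ℂ) : Prop :=
  IsRepresentingFunction V G ∧ ∀ z ∈ G \ {0}, 0 ≤ V z

/-- The uniform unit measure on the circle of center `z` and radius `r`. -/
def circleMeasure (z : ℂ) (r : ℝ) : Measure ℂ :=
  (ENNReal.ofReal (2 * π)⁻¹ • volume.restrict (Set.Ioc (0:ℝ) (2 * π))).map (circleMap z r)


lemma usc_exists_max {f : ℂ → ℝ} {s : Set ℂ} (hs : IsCompact s) (hne : s.Nonempty)
    (hf : UpperSemicontinuousOn f s) : ∃ x ∈ s, ∀ y ∈ s, f y ≤ f x := by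
  by_contra hcon
  push_neg at hcon
  choose! g hg1 hg2 using hcon
  have key : ∀ x ∈ s, ∃ u : Set ℂ, IsOpen u ∧ x ∈ u ∧ ∀ z ∈ u ∩ s, f z < f (g x) := by
    intro x hx
    have h := hf x hx (f (g x)) (hg2 x hx)
    rcases mem_nhdsWithin.1 h with ⟨u, huo, hxu, hu⟩
    exact ⟨u, huo, hxu, fun z hz => hu hz⟩
  choose! U hUo hUx hUlt using key
  obtain ⟨t, hts, hcov⟩ := hs.elim_nhds_subcover U (fun x hx => (hUo x hx).mem_nhds (hUx x hx))
  have htne : t.Nonempty := by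
    obtain ⟨x, hx⟩ := hne
    obtain ⟨y, hy, -⟩ := Set.mem_iUnion₂.1 (hcov hx)
    exact ⟨y, hy⟩
  obtain ⟨x₀, hx₀t, hx₀max⟩ := t.exists_max_image (fun x => f (g x)) htne
  have hgx₀s : g x₀ ∈ s := hg1 x₀ (hts x₀ hx₀t)
  obtain ⟨x₁, hx₁t, hmem⟩ := Set.mem_iUnion₂.1 (hcov hgx₀s)
  exact absurd (hx₀max x₁ hx₁t)
    (not_le.2 (hUlt x₁ (hts x₁ hx₁t) _ ⟨hmem, hgx₀s⟩))

lemma sqmean (c : ℂ) (ρ : ℝ) :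
    ∫ θ in (0:ℝ)..(2*π), ‖circleMap c ρ θ‖^2 = 2*π*(‖c‖^2 + ρ^2) := by
  have hpt : ∀ θ : ℝ, ‖circleMap c ρ θ‖^2
      = (‖c‖^2 + ρ^2) + ((2*ρ*c.re) * Real.cos θ + (2*ρ*c.im) * Real.sin θ) := by
    intro θ
    have h1 : ‖circleMap c ρ θ‖^2 = Complex.normSq (circleMap c ρ θ) := by
      rw [← Complex.sq_norm]
    have h2 : ‖c‖^2 = Complex.normSq c := by rw [← Complex.sq_norm]
    rw [h1, h2]
    simp only [circleMap, Complex.normSq_apply, Complex.add_re, Complex.add_im,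
      Complex.mul_re, Complex.mul_im, Complex.ofReal_re, Complex.ofReal_im,
      Complex.exp_ofReal_mul_I_re, Complex.exp_ofReal_mul_I_im]
    nlinarith [Real.sin_sq_add_cos_sq θ]
  rw [intervalIntegral.integral_congr (g := fun θ =>
      (‖c‖^2 + ρ^2) + ((2*ρ*c.re) * Real.cos θ + (2*ρ*c.im) * Real.sin θ))
      (fun θ _ => hpt θ)]
  rw [intervalIntegral.integral_add (intervalIntegrable_const)
      ((show Continuous fun θ : ℝ => (2*ρ*c.re) * Real.cos θ + (2*ρ*c.im) * Real.sin θ from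
        (continuous_const.mul Real.continuous_cos).add
        (continuous_const.mul Real.continuous_sin)).intervalIntegrable _ _),
    intervalIntegral.integral_add
      ((show Continuous fun θ : ℝ => (2*ρ*c.re) * Real.cos θ from
        continuous_const.mul Real.continuous_cos).intervalIntegrable _ _)
      ((show Continuous fun θ : ℝ => (2*ρ*c.im) * Real.sin θ from
        continuous_const.mul Real.continuous_sin).intervalIntegrable _ _),
    intervalIntegral.integral_const_mul, intervalIntegral.integral_const_mul,
    integral_cos, integral_sin,
    intervalIntegral.integral_const]
  simp [Real.sin_two_pi, Real.cos_two_pi]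

lemma logmean_pos (x ρ : ℝ) (hρ : 0 < ρ) (hx : ρ < x) :
    ∫ θ in (0:ℝ)..(2*π), Real.log ‖circleMap (x:ℂ) ρ θ‖ = 2*π*Real.log x := by
  have hx0 : (0:ℝ) < x := hρ.trans hx
  have hre : ∀ w : ℂ, w ∈ closedBall (x:ℂ) ρ → 0 < w.re := by
    intro w hw
    have h1 : |(w - x).re| ≤ ‖w - (x:ℂ)‖ := Complex.abs_re_le_norm _
    rw [mem_closedBall, dist_eq_norm] at hw
    have : -(ρ:ℝ) ≤ (w - x).re := by
      have := neg_abs_le ((w - (x:ℂ)).re)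
      linarith [h1.trans hw]
    have hre' : (w - (x:ℂ)).re = w.re - x := by simp
    linarith [hre' ▸ this]
  have hslit : ∀ w : ℂ, w ∈ closedBall (x:ℂ) ρ → w ∈ Complex.slitPlane :=
    fun w hw => Or.inl (hre w hw)
  have hdc : DiffContOnCl ℂ Complex.log (ball (x:ℂ) ρ) := by
    constructor
    · exact fun w hw => (Complex.differentiableAt_log
        (hslit w (ball_subset_closedBall hw))).differentiableWithinAt
    · intro w hw
      have hw' : w ∈ closedBall (x:ℂ) ρ := closure_ball_subset_closedBall hw
      exact (continuousAt_clog (hslit w hw')).continuousWithinAt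
  have hmem : (x:ℂ) ∈ ball (x:ℂ) ρ := mem_ball_self hρ
  have hc := hdc.circleIntegral_sub_inv_smul hmem
  have hne : ∀ θ : ℝ, circleMap 0 ρ θ ≠ 0 := fun θ => circleMap_ne_center hρ.ne'
  have hcont : Continuous fun θ : ℝ => Complex.log (circleMap (x:ℂ) ρ θ) := by
    rw [continuous_iff_continuousAt]
    intro θ
    exact (continuousAt_clog (hslit _ (circleMap_mem_closedBall _ hρ.le θ))).comp
      (continuous_circleMap _ _).continuousAt
  have hunfold : (∮ z in C((x:ℂ), ρ), (z - (x:ℂ))⁻¹ • Complex.log z)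
      = Complex.I * ∫ θ in (0:ℝ)..(2*π), Complex.log (circleMap (x:ℂ) ρ θ) := by
    rw [circleIntegral, ← intervalIntegral.integral_const_mul]
    congr 1
    funext θ
    rw [deriv_circleMap, circleMap_sub_center, smul_eq_mul]
    field_simp [hne θ]
    rw [smul_eq_mul, ← mul_assoc, mul_one_div_cancel (hne θ), one_mul]
  rw [hunfold] at hc
  have hI : Complex.I ≠ 0 := Complex.I_ne_zero
  have hc2 : (∫ θ in (0:ℝ)..(2*π), Complex.log (circleMap (x:ℂ) ρ θ))
      = ((2*π*Real.log x : ℝ) : ℂ) := by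
    have : Complex.I * ∫ θ in (0:ℝ)..(2*π), Complex.log (circleMap (x:ℂ) ρ θ)
        = Complex.I * ((2*π*Real.log x : ℝ) : ℂ) := by
      rw [hc, smul_eq_mul]
      rw [← Complex.ofReal_log hx0.le]
      push_cast
      ring
    exact mul_left_cancel₀ hI this
  have hint : IntervalIntegrable (fun θ : ℝ => Complex.log (circleMap (x:ℂ) ρ θ))
      volume 0 (2*π) := hcont.intervalIntegrable _ _
  have := Complex.reCLM.intervalIntegral_comp_comm hint
  rw [hc2] at this
  simp only [Complex.reCLM_apply] at this
  have heq : (fun θ : ℝ => (Complex.log (circleMap (x:ℂ) ρ θ)).re)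
      = fun θ : ℝ => Real.log ‖circleMap (x:ℂ) ρ θ‖ := by
    funext θ; rw [Complex.log_re]
  rw [heq] at this
  rw [this]
  simp

lemma logmean (c : ℂ) (ρ : ℝ) (hρ : 0 < ρ) (h : ρ < ‖c‖) :
    ∫ θ in (0:ℝ)..(2*π), Real.log ‖circleMap c ρ θ‖ = 2*π*Real.log ‖c‖ := by
  set α := Complex.arg c with hα
  have hkey : ∀ θ : ℝ, ‖circleMap c ρ θ‖ = ‖circleMap (‖c‖:ℂ) ρ (θ - α)‖ := by
    intro θ
    have hrot : circleMap c ρ θ = Complex.exp (α * Complex.I) * circleMap (‖c‖:ℂ) ρ (θ - α) := by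
      rw [circleMap, circleMap, mul_add]
      have habs : Complex.exp (α * Complex.I) * (‖c‖:ℂ) = c := by
        rw [mul_comm]
        exact Complex.norm_mul_exp_arg_mul_I c
      have hexp : Complex.exp (α * Complex.I) * ((ρ:ℂ) * Complex.exp ((θ - α : ℝ) * Complex.I))
          = (ρ:ℂ) * Complex.exp ((θ:ℝ) * Complex.I) := by
        rw [mul_left_comm, ← Complex.exp_add]
        congr 2
        push_cast
        ring
      rw [habs, hexp]
    rw [hrot, norm_mul]
    have : ‖Complex.exp (α * Complex.I)‖ = 1 := by
      exact Complex.norm_exp_ofReal_mul_I α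
    rw [this, one_mul]
  calc ∫ θ in (0:ℝ)..(2*π), Real.log ‖circleMap c ρ θ‖
      = ∫ θ in (0:ℝ)..(2*π), (fun θ' => Real.log ‖circleMap (‖c‖:ℂ) ρ θ'‖) (θ - α) := by
        apply intervalIntegral.integral_congr
        intro θ _
        show Real.log ‖circleMap c ρ θ‖ = Real.log ‖circleMap (‖c‖:ℂ) ρ (θ - α)‖
        rw [hkey θ]
    _ = ∫ θ in (0-α)..(2*π-α), Real.log ‖circleMap (‖c‖:ℂ) ρ θ‖ := by
        exact intervalIntegral.integral_comp_sub_right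
          (fun θ' => Real.log ‖circleMap (‖c‖:ℂ) ρ θ'‖) α
    _ = ∫ θ in (0:ℝ)..(2*π), Real.log ‖circleMap (‖c‖:ℂ) ρ θ‖ := by
        have hper : Function.Periodic (fun θ => Real.log ‖circleMap (‖c‖:ℂ) ρ θ‖) (2*π) :=
          (periodic_circleMap (‖c‖:ℂ) ρ).comp (fun z => Real.log ‖z‖)
        have := hper.intervalIntegral_add_eq (-α) 0
        simpa [sub_eq_neg_add, add_comm] using this
    _ = 2*π*Real.log ‖c‖ := logmean_pos ‖c‖ ρ hρ h


set_option maxHeartbeats 1000000 in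
/-- A representing function on the unit disk vanishing outside `{|ζ| < r}` is dominated by
`log⁺ (r / |ζ|)`. -/
theorem representingFunction_le_logPlus {V : ℂ → ℝ} {r : ℝ} (hr0 : 0 < r) (hr1 : r < 1)
    (hV : IsRepresentingFunction V (ball (0:ℂ) 1))
    (hvanish : ∀ ζ ∈ ball (0:ℂ) 1, r ≤ ‖ζ‖ → V ζ = 0) :
    ∀ ζ ∈ ball (0:ℂ) 1, ζ ≠ 0 → V ζ ≤ max (Real.log (r / ‖ζ‖)) 0 := by
  obtain ⟨⟨husc, hsub⟩, -, C, r₀, hr₀, hgrowth⟩ := hV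
  intro ζ hζ hζ0
  have hζpos : 0 < ‖ζ‖ := norm_pos_iff.2 hζ0
  by_cases hcase : ‖ζ‖ < r
  swap
  · push_neg at hcase
    rw [hvanish ζ hζ hcase]
    exact le_max_right _ _
  refine le_trans ?_ (le_max_left _ _)
  set L := Real.log r - Real.log ‖ζ‖ with hLdef
  have hLdiv : Real.log (r / ‖ζ‖) = L := Real.log_div hr0.ne' hζpos.ne'
  rw [hLdiv]
  have hL0 : 0 ≤ L := by
    rw [← hLdiv]
    exact Real.log_nonneg (by rw [le_div_iff₀ hζpos]; linarith)
  have key : ∀ ε : ℝ, 0 < ε → ∀ δ : ℝ, 0 < δ → V ζ ≤ (1+ε)*L + δ*r^2 := by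
    intro ε hε δ hδ
    set t := min (min ‖ζ‖ (r₀/2)) (Real.exp (((1+ε)*Real.log r - C)/ε)) with htdef
    have ht0 : 0 < t := lt_min (lt_min hζpos (by linarith)) (Real.exp_pos _)
    have htζ : t ≤ ‖ζ‖ := le_trans (min_le_left _ _) (min_le_left _ _)
    have htr₀ : t < r₀ :=
      lt_of_le_of_lt (le_trans (min_le_left _ _) (min_le_right _ _)) (by linarith)
    have htlog : ε * Real.log t + C - (1+ε)*Real.log r ≤ 0 := by
      have h1 : Real.log t ≤ ((1+ε)*Real.log r - C)/ε := by
        calc Real.log t ≤ Real.log (Real.exp (((1+ε)*Real.log r - C)/ε)) :=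
              (Real.log_le_log_iff ht0 (Real.exp_pos _)).2 (min_le_right _ _)
          _ = _ := Real.log_exp _
      have h2 := mul_le_mul_of_nonneg_left h1 hε.le
      rw [mul_div_cancel₀ _ hε.ne'] at h2
      linarith
    have htr : t < r := lt_of_le_of_lt htζ hcase
    set A : Set ℂ := closedBall (0:ℂ) r \ ball 0 t with hA
    have hmemA : ∀ z : ℂ, z ∈ A ↔ t ≤ ‖z‖ ∧ ‖z‖ ≤ r := by
      intro z
      simp [hA, Set.mem_diff, mem_closedBall_zero_iff, mem_ball_zero_iff, not_lt, and_comm]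
    have hAcomp : IsCompact A := (isCompact_closedBall _ _).diff isOpen_ball
    have hAsub : A ⊆ ball (0:ℂ) 1 \ {0} := by
      intro z hz
      rw [hmemA] at hz
      refine ⟨by rw [mem_ball_zero_iff]; linarith [hz.2], ?_⟩
      simp only [Set.mem_singleton_iff]
      intro h0
      rw [h0] at hz
      simp at hz
      linarith [hz.1]
    set φ : ℂ → ℝ := fun z => V z + (δ*‖z‖^2 - (1+ε)*(Real.log r - Real.log ‖z‖)) with hφ
    have hφdef : ∀ z, φ z = V z + (δ*‖z‖^2 - (1+ε)*(Real.log r - Real.log ‖z‖)) :=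
      fun z => rfl
    have hφusc : UpperSemicontinuousOn φ A := by
      apply UpperSemicontinuousOn.add (husc.mono hAsub)
      apply ContinuousOn.upperSemicontinuousOn
      apply ContinuousOn.sub
      · exact (continuous_const.mul (continuous_norm.pow 2)).continuousOn
      · apply ContinuousOn.mul continuousOn_const
        apply ContinuousOn.sub continuousOn_const
        intro z hz
        have hzne : ‖z‖ ≠ 0 := ne_of_gt (lt_of_lt_of_le ht0 ((hmemA z).1 hz).1)
        exact ((Real.continuousAt_log hzne).comp
          continuous_norm.continuousAt).continuousWithinAt
    have hζA : ζ ∈ A := (hmemA ζ).2 ⟨htζ, hcase.le⟩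
    obtain ⟨z0, hz0A, hz0max⟩ := usc_exists_max hAcomp ⟨ζ, hζA⟩ hφusc
    obtain ⟨hz0t, hz0r⟩ := (hmemA z0).1 hz0A
    have hz0pos : 0 < ‖z0‖ := lt_of_lt_of_le ht0 hz0t
    have hz0ne : z0 ≠ 0 := norm_pos_iff.1 hz0pos
    have hmain : φ z0 ≤ δ * r^2 := by
      rcases eq_or_lt_of_le hz0r with h1 | h1
      · -- outer boundary
        have hz0ball : z0 ∈ ball (0:ℂ) 1 := by rw [mem_ball_zero_iff, h1]; exact hr1
        have hV0 : V z0 = 0 := hvanish z0 hz0ball (le_of_eq h1.symm)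
        have hlz : Real.log r - Real.log ‖z0‖ = 0 := by rw [h1, sub_self]
        rw [hφdef, hV0, hlz, h1]
        simp
      rcases eq_or_lt_of_le hz0t with h2 | h2
      · -- inner boundary
        have hgr : V z0 ≤ -Real.log ‖z0‖ + C := hgrowth z0 hz0ne (by rw [← h2]; exact htr₀)
        have htlog' : ε * Real.log ‖z0‖ + C - (1+ε)*Real.log r ≤ 0 := by
          rw [← h2]; exact htlog
        have hsq : ‖z0‖^2 ≤ r^2 := pow_le_pow_left₀ (norm_nonneg z0) hz0r 2
        have hexpand : (1+ε)*(Real.log r - Real.log ‖z0‖)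
            = Real.log r + ε*Real.log r - Real.log ‖z0‖ - ε*Real.log ‖z0‖ := by ring
        rw [hφdef]
        linarith [mul_le_mul_of_nonneg_left hsq hδ.le]
      · -- interior point
        set ρ := min (‖z0‖ - t) (r - ‖z0‖) with hρdef
        have hρ0 : 0 < ρ := lt_min (by linarith) (by linarith)
        have hρz0 : ρ < ‖z0‖ := lt_of_le_of_lt (min_le_left _ _) (by linarith)
        have hball : closedBall z0 ρ ⊆ A := by
          intro w hw
          rw [mem_closedBall, dist_eq_norm] at hw
          have habs := abs_le.1 (le_trans (abs_norm_sub_norm_le w z0) hw)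
          rw [hmemA]
          constructor
          · have := min_le_left (‖z0‖ - t) (r - ‖z0‖)
            linarith [habs.1]
          · have := min_le_right (‖z0‖ - t) (r - ‖z0‖)
            linarith [habs.2]
        have hsubm := hsub z0 (hAsub hz0A) ρ hρ0 (fun w hw => hAsub (hball hw))
        by_cases hint : IntervalIntegrable (fun θ => V (circleMap z0 ρ θ)) volume 0 (2*π)
        · exfalso
          set M := φ z0 with hM
          have hptwise : ∀ θ ∈ Set.Icc (0:ℝ) (2*π),
              V (circleMap z0 ρ θ) ≤ M - δ*‖circleMap z0 ρ θ‖^2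
                + (1+ε)*(Real.log r - Real.log ‖circleMap z0 ρ θ‖) := by
            intro θ _
            have hmem := hball (circleMap_mem_closedBall z0 hρ0.le θ)
            have hle := hz0max _ hmem
            rw [hφdef] at hle
            linarith
          have hcircn : Continuous fun θ : ℝ => ‖circleMap z0 ρ θ‖ :=
            (continuous_circleMap _ _).norm
          have hcnz : ∀ θ : ℝ, ‖circleMap z0 ρ θ‖ ≠ 0 := by
            intro θ
            have := (hmemA _).1 (hball (circleMap_mem_closedBall z0 hρ0.le θ))
            exact ne_of_gt (lt_of_lt_of_le ht0 this.1)
          have hclog : Continuous fun θ : ℝ => Real.log ‖circleMap z0 ρ θ‖ :=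
            hcircn.log hcnz
          have hcont2 : Continuous fun θ : ℝ => M - δ*‖circleMap z0 ρ θ‖^2
              + (1+ε)*(Real.log r - Real.log ‖circleMap z0 ρ θ‖) :=
            (continuous_const.sub (continuous_const.mul (hcircn.pow 2))).add
              (continuous_const.mul (continuous_const.sub hclog))
          have hmono := intervalIntegral.integral_mono_on
            (by positivity : (0:ℝ) ≤ 2*π) hint (hcont2.intervalIntegrable _ _) hptwise
          have i1 : IntervalIntegrable (fun θ : ℝ => (-δ)*‖circleMap z0 ρ θ‖^2)
              volume 0 (2*π) := (continuous_const.mul (hcircn.pow 2)).intervalIntegrable _ _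
          have i2 : IntervalIntegrable (fun θ : ℝ => (-(1+ε))*Real.log ‖circleMap z0 ρ θ‖)
              volume 0 (2*π) := (continuous_const.mul hclog).intervalIntegrable _ _
          have hRHS : (∫ θ in (0:ℝ)..(2*π), (M - δ*‖circleMap z0 ρ θ‖^2
              + (1+ε)*(Real.log r - Real.log ‖circleMap z0 ρ θ‖)))
              = 2*π*(M - δ*(‖z0‖^2+ρ^2) + (1+ε)*(Real.log r - Real.log ‖z0‖)) := by
            have e1 := sqmean z0 ρ
            have e2 := logmean z0 ρ hρ0 hρz0
            rw [show (fun θ : ℝ => M - δ*‖circleMap z0 ρ θ‖^2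
                + (1+ε)*(Real.log r - Real.log ‖circleMap z0 ρ θ‖))
                = fun θ : ℝ => ((M + (1+ε)*Real.log r) + (-δ)*‖circleMap z0 ρ θ‖^2)
                  + (-(1+ε))*Real.log ‖circleMap z0 ρ θ‖ from by funext θ; ring]
            rw [intervalIntegral.integral_add (intervalIntegrable_const.add i1) i2,
              intervalIntegral.integral_add intervalIntegrable_const i1,
              intervalIntegral.integral_const_mul, intervalIntegral.integral_const_mul,
              intervalIntegral.integral_const, e1, e2]
            simp only [smul_eq_mul]
            ring
          rw [hRHS] at hmono
          have hπ : (0:ℝ) < 2*π := by positivity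
          have hVz0 : V z0 ≤ M - δ*(‖z0‖^2+ρ^2) + (1+ε)*(Real.log r - Real.log ‖z0‖) := by
            have h3 := le_trans hsubm
              (mul_le_mul_of_nonneg_left hmono (by positivity : (0:ℝ) ≤ (2*π)⁻¹))
            rwa [inv_mul_cancel_left₀ hπ.ne'] at h3
          have hMeq : M = V z0 + (δ*‖z0‖^2 - (1+ε)*(Real.log r - Real.log ‖z0‖)) := hφdef z0
          have hδρ : 0 < δ*ρ^2 := by positivity
          have hexpand : δ*(‖z0‖^2+ρ^2) = δ*‖z0‖^2 + δ*ρ^2 := by ring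
          linarith
        · rw [intervalIntegral.integral_undef hint, mul_zero] at hsubm
          have hlog' : Real.log ‖z0‖ ≤ Real.log r := (Real.log_le_log_iff hz0pos hr0).2 hz0r
          have hsq : ‖z0‖^2 ≤ r^2 := pow_le_pow_left₀ (norm_nonneg z0) hz0r 2
          rw [hφdef]
          linarith [mul_le_mul_of_nonneg_left hsq hδ.le,
            mul_nonneg (by linarith : (0:ℝ) ≤ 1+ε)
              (by linarith : (0:ℝ) ≤ Real.log r - Real.log ‖z0‖)]
    have hφζ : φ ζ ≤ φ z0 := hz0max ζ hζA
    have hfin : V ζ + (δ*‖ζ‖^2 - (1+ε)*L) ≤ δ*r^2 := by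
      rw [hLdef]
      exact le_trans (le_of_eq (hφdef ζ).symm) (le_trans hφζ hmain)
    linarith [mul_nonneg hδ.le (sq_nonneg ‖ζ‖)]
  by_contra hlt
  push_neg at hlt
  set η := V ζ - L with hηdef
  have hη0 : 0 < η := by linarith
  have hL1 : (0:ℝ) < L + 1 := by linarith
  have hr2 : (0:ℝ) < r^2 + 1 := by positivity
  set ε := η/(4*(L+1)) with hεdef
  set δ := η/(4*(r^2+1)) with hδdef
  have hε : 0 < ε := by positivity
  have hδ : 0 < δ := by positivity
  have h1 := key ε hε δ hδ
  have hx : ε*L + ε = η/4 := by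
    rw [hεdef]
    field_simp
  have hy : δ*r^2 + δ = η/4 := by
    rw [hδdef]
    field_simp
  have hexp : (1+ε)*L = L + ε*L := by ring
  clear_value L η ε δ
  linarith


end
end

section
/- Let f be a meromorphic function on the unit disk 𝔻 with f(0) = 1 and bounded Nevanlinna characteristic: T_f(r) = (1/2π)∫₀^{2π} u_f(re^{iθ}) dθ ≤ C for all r < 1, where f = p₀/q₀ with p₀, q₀ holomorphic without common zeros, p₀(0) = q₀(0) = 1, and u_f = max(log|p₀|, log|q₀|). Then f = g/h for bounded holomorphic functions g, h on 𝔻 without common zeros. -/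
open MeasureTheory Metric Real Set

noncomputable section

section NevanlinnaAux
open Complex intervalIntegral

namespace NevAux

def ker (r : ℝ) (a : ℂ) (θ : ℝ) : ℂ := (circleMap 0 r θ + a) / (circleMap 0 r θ - a)

variable {r R : ℝ} {a w : ℂ} {θ : ℝ}

lemma norm_circleMap (hr : 0 ≤ r) (θ : ℝ) : ‖circleMap 0 r θ‖ = r := by
  rw [norm_circleMap_zero, _root_.abs_of_nonneg hr]

lemma circleMap_sub_ne (hr : 0 < r) (ha : ‖a‖ < r) : circleMap 0 r θ - a ≠ 0 := by
  intro h
  have : circleMap 0 r θ = a := by linear_combination h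
  rw [← this, norm_circleMap hr.le] at ha
  exact lt_irrefl _ ha

lemma closure_ball' (hr : 0 < r) : closure (ball (0:ℂ) r) = closedBall 0 r :=
  closure_ball 0 hr.ne'

lemma continuous_comp_circleMap {g : ℂ → ℂ} (hr : 0 < r) (hg : ContinuousOn g (closedBall 0 r)) :
    Continuous fun θ => g (circleMap 0 r θ) := by
  apply hg.comp_continuous (continuous_circleMap 0 r)
  intro θ
  simp [mem_closedBall_zero_iff, norm_circleMap hr.le]

lemma contOn_circle {g : ℂ → ℂ} (hr : 0 < r) (hg : DiffContOnCl ℂ g (ball 0 r)) :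
    Continuous fun θ => g (circleMap 0 r θ) := by
  apply continuous_comp_circleMap hr
  have := hg.continuousOn
  rwa [closure_ball' hr] at this

lemma cauchy_theta {g : ℂ → ℂ} (hr : 0 < r) (hg : DiffContOnCl ℂ g (ball 0 r))
    (hw : w ∈ ball (0:ℂ) r) :
    ∫ θ in (0:ℝ)..(2*π), circleMap 0 r θ * ((circleMap 0 r θ - w)⁻¹ * g (circleMap 0 r θ))
      = (2 * π) * g w := by
  have h := hg.circleIntegral_sub_inv_smul hw
  simp only [circleIntegral, deriv_circleMap, smul_eq_mul] at h
  have h2 : ∫ θ in (0:ℝ)..(2*π),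
      I * (circleMap 0 r θ * ((circleMap 0 r θ - w)⁻¹ * g (circleMap 0 r θ)))
      = 2 * ↑π * I * g w := by
    rw [← h]
    apply intervalIntegral.integral_congr
    intro θ _
    ring
  rw [intervalIntegral.integral_const_mul] at h2
  apply mul_left_cancel₀ Complex.I_ne_zero
  rw [h2]
  ring

lemma integrand_cont {g : ℂ → ℂ} (hr : 0 < r) (hg : DiffContOnCl ℂ g (ball 0 r))
    (hw : ‖w‖ < r) :
    Continuous fun θ => circleMap 0 r θ * ((circleMap 0 r θ - w)⁻¹ * g (circleMap 0 r θ)) := by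
  have h1 : Continuous fun θ => g (circleMap 0 r θ) := contOn_circle hr hg
  have h2 : Continuous fun θ => (circleMap 0 r θ - w)⁻¹ :=
    ((continuous_circleMap 0 r).sub continuous_const).inv₀ fun θ => circleMap_sub_ne hr hw
  exact (continuous_circleMap 0 r).mul (h2.mul h1)

lemma integral_ker_mul {g : ℂ → ℂ} (hr : 0 < r) (hg : DiffContOnCl ℂ g (ball 0 r))
    (ha : ‖a‖ < r) :
    ∫ θ in (0:ℝ)..(2*π), ker r a θ * g (circleMap 0 r θ) = 2 * π * (2 * g a - g 0) := by
  have h1 := cauchy_theta hr hg (mem_ball_zero_iff.2 ha)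
  have h0 := cauchy_theta hr hg (mem_ball_self hr)
  have key : ∀ θ : ℝ, ker r a θ * g (circleMap 0 r θ)
      = 2 * (circleMap 0 r θ * ((circleMap 0 r θ - a)⁻¹ * g (circleMap 0 r θ)))
        - circleMap 0 r θ * ((circleMap 0 r θ - 0)⁻¹ * g (circleMap 0 r θ)) := by
    intro θ
    have hζa : circleMap 0 r θ - a ≠ 0 := circleMap_sub_ne hr ha
    have hζ0 : circleMap 0 r θ ≠ 0 := circleMap_ne_center hr.ne'
    rw [ker]
    rw [sub_zero]
    field_simp
    ring
  rw [intervalIntegral.integral_congr (fun θ _ => key θ),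
    intervalIntegral.integral_sub, intervalIntegral.integral_const_mul, h1, h0]
  · ring
  · exact (continuous_const.mul (integrand_cont hr hg ha)).intervalIntegrable _ _
  · have : Continuous fun θ =>
        circleMap 0 r θ * ((circleMap 0 r θ - 0)⁻¹ * g (circleMap 0 r θ)) := by
      simpa using integrand_cont hr hg (w := 0) (by simpa using hr)
    exact this.intervalIntegrable _ _

lemma integral_conj_ker_mul {g : ℂ → ℂ} (hr : 0 < r) (hg : DiffContOnCl ℂ g (ball 0 r))
    (ha : ‖a‖ < r) :
    ∫ θ in (0:ℝ)..(2*π), (starRingEnd ℂ) (ker r a θ) * g (circleMap 0 r θ) = 2 * π * g 0 := by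
  have hden : ∀ z : ℂ, ‖z‖ ≤ r → ((r:ℂ)^2 - (starRingEnd ℂ) a * z) ≠ 0 := by
    intro z hz h
    have h1 : ‖(starRingEnd ℂ) a * z‖ < r ^ 2 := by
      rw [norm_mul, RCLike.norm_conj]
      nlinarith [norm_nonneg a, norm_nonneg z]
    have h2 : (r:ℂ)^2 = (starRingEnd ℂ) a * z := by linear_combination h
    rw [← h2, norm_pow, Complex.norm_real, Real.norm_eq_abs, _root_.abs_of_nonneg hr.le] at h1
    exact lt_irrefl _ h1
  set Λ : ℂ → ℂ := fun z => ((r:ℂ)^2 + (starRingEnd ℂ) a * z) / ((r:ℂ)^2 - (starRingEnd ℂ) a * z)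
    with hΛ
  have hΛd : DiffContOnCl ℂ Λ (ball 0 r) := by
    constructor
    · apply DifferentiableOn.div
      · exact (differentiable_const _).differentiableOn.add
          ((differentiable_const _).mul differentiable_id).differentiableOn
      · exact (differentiable_const _).differentiableOn.sub
          ((differentiable_const _).mul differentiable_id).differentiableOn
      · exact fun z hz => hden z (le_of_lt (mem_ball_zero_iff.1 hz))
    · rw [closure_ball' hr]
      apply ContinuousOn.div
      · exact (continuous_const.add (continuous_const.mul continuous_id)).continuousOn
      · exact (continuous_const.sub (continuous_const.mul continuous_id)).continuousOn
      · exact fun z hz => hden z (mem_closedBall_zero_iff.1 hz)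
  set G₂ : ℂ → ℂ := fun z => Λ z * g z with hG₂
  have hG₂d : DiffContOnCl ℂ G₂ (ball 0 r) := by
    have := hΛd.smul hg
    simpa [smul_eq_mul] using this
  have h0 := cauchy_theta hr hG₂d (mem_ball_self hr)
  have key : ∀ θ : ℝ, (starRingEnd ℂ) (ker r a θ) * g (circleMap 0 r θ)
      = circleMap 0 r θ * ((circleMap 0 r θ - 0)⁻¹ * G₂ (circleMap 0 r θ)) := by
    intro θ
    set ζ := circleMap 0 r θ with hζdef
    have hζ0 : ζ ≠ 0 := circleMap_ne_center hr.ne'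
    have hζa : ζ - a ≠ 0 := circleMap_sub_ne hr ha
    have hζconj : (starRingEnd ℂ) ζ * ζ = (r:ℂ)^2 := by
      have h1 : ((Complex.normSq ζ : ℝ) : ℂ) = (starRingEnd ℂ) ζ * ζ :=
        Complex.normSq_eq_conj_mul_self ▸ rfl
      have h2 : Complex.normSq ζ = r ^ 2 := by
        rw [← Complex.sq_norm, norm_circleMap hr.le]
      rw [← h1, h2]
      push_cast
      ring
    have hconjne : (starRingEnd ℂ) ζ - (starRingEnd ℂ) a ≠ 0 := by
      rw [← map_sub]
      exact fun h => hζa (by simpa using congrArg (starRingEnd ℂ) h)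
    have hdζ : ((r:ℂ)^2 - (starRingEnd ℂ) a * ζ) ≠ 0 := by
      apply hden
      rw [norm_circleMap hr.le]
    rw [ker, hG₂, hΛ, map_div₀, map_add, map_sub, sub_zero]
    field_simp
    rw [← hζdef]
    linear_combination ((starRingEnd ℂ) a * g ζ * ζ + g ζ * (r:ℂ)^2) * inv_mul_cancel₀ hconjne
      + (-(2:ℂ) * (starRingEnd ℂ) a * g ζ * ((starRingEnd ℂ) ζ - (starRingEnd ℂ) a)⁻¹) * hζconj
  rw [intervalIntegral.integral_congr (fun θ _ => key θ), h0]
  have hΛ0 : Λ 0 = 1 := by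
    rw [hΛ]
    have h := hden 0 (by simp [hr.le])
    simp only [mul_zero, sub_zero, add_zero] at h ⊢
    exact div_self h
  rw [hG₂]
  simp only [hΛ0, one_mul]
lemma ker_norm_le (hr : 0 < r) (ha : ‖a‖ < r) : ‖ker r a θ‖ ≤ (r + ‖a‖) / (r - ‖a‖) := by
  have h1 : ‖circleMap 0 r θ + a‖ ≤ r + ‖a‖ := by
    simpa [norm_circleMap hr.le] using norm_add_le (circleMap 0 r θ) a
  have h2 : r - ‖a‖ ≤ ‖circleMap 0 r θ - a‖ := by
    have := norm_sub_norm_le (circleMap 0 r θ) a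
    simpa [norm_circleMap hr.le] using this
  rw [ker, norm_div]
  exact div_le_div₀ (by positivity) h1 (by linarith) h2

lemma ker_re_nonneg (hr : 0 < r) (ha : ‖a‖ < r) : 0 ≤ (ker r a θ).re := by
  set ζ := circleMap 0 r θ with hζ
  have hXre : ((ζ + a) * (starRingEnd ℂ) (ζ - a)).re = Complex.normSq ζ - Complex.normSq a := by
    simp only [Complex.mul_re, Complex.sub_re, Complex.sub_im, Complex.add_re, Complex.add_im,
      Complex.conj_re, Complex.conj_im, Complex.normSq_apply]
    ring
  have hkey : ker r a θ = (((Complex.normSq (ζ - a))⁻¹ : ℝ) : ℂ) * ((ζ + a) * (starRingEnd ℂ) (ζ - a)) := by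
    rw [ker, div_eq_mul_inv, Complex.inv_def]
    push_cast
    ring
  rw [hkey, Complex.re_ofReal_mul, hXre]
  have h1 : Complex.normSq ζ = r ^ 2 := by
    rw [← Complex.sq_norm, norm_circleMap hr.le]
  have h2 : Complex.normSq a = ‖a‖ ^ 2 := by
    rw [← Complex.sq_norm]
  have h3 : ‖a‖ ^ 2 ≤ r ^ 2 := by nlinarith [norm_nonneg a]
  have : (0:ℝ) ≤ Complex.normSq ζ - Complex.normSq a := by rw [h1, h2]; linarith
  exact mul_nonneg (inv_nonneg.2 (Complex.normSq_nonneg _)) this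

lemma ker_zero (hr : 0 < r) : ker r 0 θ = 1 := by
  rw [ker]
  simp [div_self, circleMap_ne_center hr.ne', sub_ne_zero]

/-- Herglotz transform of a function on `[0, 2π]`. -/
def herg (V : ℝ → ℝ) (r : ℝ) (a : ℂ) : ℂ :=
  ((2 * π)⁻¹ : ℝ) • ∫ θ in (0:ℝ)..(2 * π), (V θ : ℂ) * ker r a θ


lemma ker_cont (hr : 0 < r) (ha : ‖a‖ < r) : Continuous fun θ => ker r a θ := by
  apply Continuous.div
  · exact (continuous_circleMap 0 r).add continuous_const
  · exact (continuous_circleMap 0 r).sub continuous_const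
  · exact fun θ => circleMap_sub_ne hr ha

lemma intervalIntegral_conj {f : ℝ → ℂ} {a b : ℝ} (hf : IntervalIntegrable f volume a b) :
    ∫ θ in a..b, (starRingEnd ℂ) (f θ) = (starRingEnd ℂ) (∫ θ in a..b, f θ) := by
  have := (Complex.conjCLE.toContinuousLinearEquiv.toContinuousLinearMap).intervalIntegral_comp_comm hf
  simpa using this

lemma intervalIntegral_re {f : ℝ → ℂ} {a b : ℝ} (hf : IntervalIntegrable f volume a b) :
    ∫ θ in a..b, (f θ).re = (∫ θ in a..b, f θ).re := by
  have := Complex.reCLM.intervalIntegral_comp_comm hf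
  simpa using this

lemma herg_re {V : ℝ → ℝ} (hV : Continuous V) (hr : 0 < r) (ha : ‖a‖ < r) :
    (herg V r a).re = (2*π)⁻¹ * ∫ θ in (0:ℝ)..(2*π), V θ * (ker r a θ).re := by
  have hic : IntervalIntegrable (fun θ : ℝ => (V θ : ℂ) * ker r a θ) volume 0 (2*π) :=
    ((Complex.continuous_ofReal.comp hV).mul (ker_cont hr ha)).intervalIntegrable _ _
  rw [herg, Complex.smul_re]
  congr 1
  rw [← intervalIntegral_re hic]
  apply intervalIntegral.integral_congr
  intro θ _
  exact Complex.re_ofReal_mul _ _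

lemma herg_reprod {g : ℂ → ℂ} (hr : 0 < r) (hg : DiffContOnCl ℂ g (ball 0 r)) (ha : ‖a‖ < r) :
    herg (fun θ => (g (circleMap 0 r θ)).re) r a = g a - ((g 0).im : ℂ) * I := by
  have h1 := integral_ker_mul hr hg ha
  have h2 := integral_conj_ker_mul hr hg ha
  have hgc : Continuous fun θ => g (circleMap 0 r θ) := contOn_circle hr hg
  have hkc : Continuous fun θ => ker r a θ := ker_cont hr ha
  have hic2 : IntervalIntegrable (fun θ : ℝ => (starRingEnd ℂ) (ker r a θ) * g (circleMap 0 r θ))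
      volume 0 (2*π) :=
    ((Complex.continuous_conj.comp hkc).mul hgc).intervalIntegrable _ _
  have hconj : ∫ θ in (0:ℝ)..(2*π), ker r a θ * (starRingEnd ℂ) (g (circleMap 0 r θ))
      = (starRingEnd ℂ) (2 * π * g 0) := by
    rw [← h2, ← intervalIntegral_conj hic2]
    apply intervalIntegral.integral_congr
    intro θ _
    simp
  have hpt : ∀ θ : ℝ, (((g (circleMap 0 r θ)).re : ℂ)) * ker r a θ
      = (2:ℂ)⁻¹ * (ker r a θ * g (circleMap 0 r θ)
        + ker r a θ * (starRingEnd ℂ) (g (circleMap 0 r θ))) := by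
    intro θ
    have h := Complex.add_conj (g (circleMap 0 r θ))
    push_cast at h ⊢
    linear_combination (-(2:ℂ)⁻¹ * ker r a θ) * h
  have hicA : IntervalIntegrable (fun θ : ℝ => ker r a θ * g (circleMap 0 r θ)) volume 0 (2*π) :=
    (hkc.mul hgc).intervalIntegrable _ _
  have hicB : IntervalIntegrable
      (fun θ : ℝ => ker r a θ * (starRingEnd ℂ) (g (circleMap 0 r θ))) volume 0 (2*π) :=
    (hkc.mul (Complex.continuous_conj.comp hgc)).intervalIntegrable _ _
  rw [herg, intervalIntegral.integral_congr (fun θ _ => hpt θ),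
    intervalIntegral.integral_const_mul, intervalIntegral.integral_add hicA hicB,
    h1, hconj]
  have hπ : (π:ℂ) ≠ 0 := by
    simpa using Real.pi_ne_zero
  rw [Complex.real_smul]
  push_cast
  have hc : (starRingEnd ℂ) (2 * (π:ℂ) * g 0) = 2 * (π:ℂ) * (starRingEnd ℂ) (g 0) := by
    rw [map_mul, map_mul]
    simp [Complex.conj_ofReal, map_ofNat]
  rw [hc]
  have hsub := Complex.sub_conj (g 0)
  push_cast at hsub ⊢
  have h2π : (2 * (π:ℂ)) ≠ 0 := by
    simpa using hπ
  field_simp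
  linear_combination -hsub

lemma herg_reprod_re {g : ℂ → ℂ} (hr : 0 < r) (hg : DiffContOnCl ℂ g (ball 0 r)) (ha : ‖a‖ < r) :
    (herg (fun θ => (g (circleMap 0 r θ)).re) r a).re = (g a).re := by
  rw [herg_reprod hr hg ha]
  simp

lemma herg_const_one (hr : 0 < r) (ha : ‖a‖ < r) : herg (fun _ => 1) r a = 1 := by
  have := herg_reprod (g := fun _ => 1) hr diffContOnCl_const ha
  simpa using this

lemma herg_zero {V : ℝ → ℝ} (hr : 0 < r) :
    herg V r 0 = (((2*π)⁻¹ * ∫ θ in (0:ℝ)..(2*π), V θ : ℝ) : ℂ) := by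
  rw [herg]
  have : ∀ θ : ℝ, (V θ : ℂ) * ker r 0 θ = ((V θ : ℝ) : ℂ) := by
    intro θ
    rw [ker_zero hr, mul_one]
  rw [intervalIntegral.integral_congr (fun θ _ => this θ), intervalIntegral.integral_ofReal]
  rw [Complex.real_smul]
  push_cast
  ring

lemma circleMap_one (θ : ℝ) : circleMap 0 1 θ = Complex.exp (θ * I) := by
  simp [circleMap]

lemma fourier_as_poly (n : ℤ) : ∃ Q₁ Q₂ : Polynomial ℂ, ∀ θ : ℝ,
    (@fourier (2*π) n) (θ : AddCircle (2*π)) =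
      Q₁.eval (circleMap 0 1 θ) + (starRingEnd ℂ) (Q₂.eval (circleMap 0 1 θ)) := by
  have hfour : ∀ θ : ℝ, (@fourier (2*π) n) (θ : AddCircle (2*π)) = Complex.exp (n * θ * I) := by
    intro θ
    rw [fourier_coe_apply]
    congr 1
    have hπ : (π : ℂ) ≠ 0 := by simpa using Real.pi_ne_zero
    field_simp
    push_cast
    ring
  rcases le_or_gt 0 n with hn | hn
  · refine ⟨Polynomial.X ^ n.toNat, 0, fun θ => ?_⟩
    rw [hfour θ]
    simp only [Polynomial.eval_pow, Polynomial.eval_X, Polynomial.eval_zero, map_zero, add_zero,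
      circleMap_one]
    rw [← Complex.exp_nat_mul]
    congr 1
    have : (n.toNat : ℂ) = (n : ℂ) := by
      exact_mod_cast congrArg (Int.cast : ℤ → ℂ) (Int.toNat_of_nonneg hn)
    rw [this]; ring
  · refine ⟨0, Polynomial.X ^ (-n).toNat, fun θ => ?_⟩
    rw [hfour θ]
    simp only [Polynomial.eval_pow, Polynomial.eval_X, Polynomial.eval_zero, zero_add,
      circleMap_one]
    rw [← Complex.exp_nat_mul, ← Complex.exp_conj]
    congr 1
    have h1 : (((-n).toNat : ℕ) : ℂ) = -(n : ℂ) := by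
      exact_mod_cast congrArg (Int.cast : ℤ → ℂ) (Int.toNat_of_nonneg (by omega : (0:ℤ) ≤ -n))
    have h2 : (starRingEnd ℂ) ((((-n).toNat : ℕ) : ℂ) * (↑θ * I))
        = (((-n).toNat : ℕ) : ℂ) * (↑θ * (-I)) := by
      rw [map_mul, map_mul, Complex.conj_I]
      simp [Complex.conj_ofReal]
    rw [h2, h1]
    ring

lemma span_fourier_poly {P : C(AddCircle (2*π), ℂ)}
    (hP : P ∈ Submodule.span ℂ (Set.range (@fourier (2*π)))) :
    ∃ Q₁ Q₂ : Polynomial ℂ, ∀ θ : ℝ,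
      P (θ : AddCircle (2*π)) =
        Q₁.eval (circleMap 0 1 θ) + (starRingEnd ℂ) (Q₂.eval (circleMap 0 1 θ)) := by
  induction hP using Submodule.span_induction with
  | mem x hx =>
    obtain ⟨n, rfl⟩ := hx
    exact fourier_as_poly n
  | zero => exact ⟨0, 0, fun θ => by simp⟩
  | add x y _ _ hx hy =>
    obtain ⟨Q₁, Q₂, hQ⟩ := hx
    obtain ⟨R₁, R₂, hR⟩ := hy
    refine ⟨Q₁ + R₁, Q₂ + R₂, fun θ => ?_⟩
    simp only [ContinuousMap.add_apply, Polynomial.eval_add, map_add, hQ θ, hR θ]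
    ring
  | smul c x _ hx =>
    obtain ⟨Q₁, Q₂, hQ⟩ := hx
    refine ⟨Polynomial.C c * Q₁, Polynomial.C ((starRingEnd ℂ) c) * Q₂, fun θ => ?_⟩
    simp only [ContinuousMap.coe_smul, Pi.smul_apply, smul_eq_mul, Polynomial.eval_mul,
      Polynomial.eval_C, map_mul, Complex.conj_conj, hQ θ]
    ring

lemma trig_approx {G : ℝ → ℝ} (hG : Continuous G) (hper : Function.Periodic G (2*π))
    {ε : ℝ} (hε : 0 < ε) :
    ∃ Q : Polynomial ℂ, ∀ θ : ℝ, |G θ - (Q.eval (circleMap 0 1 θ)).re| ≤ ε := by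
  haveI : Fact (0 < 2*π) := ⟨Real.two_pi_pos⟩
  have hend : ((G 0 : ℂ)) = ((G (2*π) : ℂ)) := by
    have := hper 0
    rw [zero_add] at this
    rw [this]
  set Gc : C(AddCircle (2*π), ℂ) :=
    ⟨AddCircle.liftIco (2*π) 0 (fun x => (G x : ℂ)),
      AddCircle.liftIco_zero_continuous (by simpa using hend)
        (Complex.continuous_ofReal.comp hG).continuousOn⟩ with hGc
  have hmem : Gc ∈ closure ((Submodule.span ℂ (Set.range (@fourier (2*π)))) : Set _) := by
    have h := span_fourier_closure_eq_top (T := 2*π)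
    have : Gc ∈ (Submodule.span ℂ (Set.range (@fourier (2*π)))).topologicalClosure := by
      rw [h]; trivial
    rw [← Submodule.topologicalClosure_coe]; exact this
  rw [Metric.mem_closure_iff] at hmem
  obtain ⟨P, hPmem, hPdist⟩ := hmem ε hε
  obtain ⟨Q₁, Q₂, hQ⟩ := span_fourier_poly hPmem
  refine ⟨Q₁ + Q₂, fun θ => ?_⟩
  -- reduce to θ ∈ Ico 0 (2π) by periodicity
  have hperR : Function.Periodic (fun θ : ℝ => |G θ - ((Q₁ + Q₂).eval (circleMap 0 1 θ)).re|)
      (2*π) := by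
    intro x
    have e1 : G (x + 2*π) = G x := hper x
    have e2 : circleMap 0 1 (x + 2*π) = circleMap 0 1 x := periodic_circleMap 0 1 x
    simp only [e1, e2]
  set θ₀ := toIcoMod Real.two_pi_pos 0 θ with hθ₀
  have hmemIco : θ₀ ∈ Ico (0:ℝ) (2*π) := toIcoMod_mem_Ico' _ _
  have hsub : θ = θ₀ + toIcoDiv Real.two_pi_pos 0 θ • (2*π) := by
    rw [hθ₀, toIcoMod]
    ring
  have hred : |G θ - ((Q₁ + Q₂).eval (circleMap 0 1 θ)).re|
      = |G θ₀ - ((Q₁ + Q₂).eval (circleMap 0 1 θ₀)).re| := by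
    conv_lhs => rw [hsub]
    exact (hperR.zsmul _) θ₀
  rw [hred]
  -- now estimate at θ₀
  have hGcθ : Gc (θ₀ : AddCircle (2*π)) = ((G θ₀ : ℂ)) := by
    show AddCircle.liftIco (2*π) 0 (fun x => (G x : ℂ)) (θ₀ : AddCircle (2*π)) = _
    exact AddCircle.liftIco_zero_coe_apply hmemIco
  have hdiff : G θ₀ - ((Q₁ + Q₂).eval (circleMap 0 1 θ₀)).re
      = (Gc (θ₀ : AddCircle (2*π)) - P (θ₀ : AddCircle (2*π))).re := by
    rw [hGcθ, Complex.sub_re, Complex.ofReal_re, hQ θ₀]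
    simp [Polynomial.eval_add]
  rw [hdiff]
  have h1 : |(Gc (θ₀ : AddCircle (2*π)) - P (θ₀ : AddCircle (2*π))).re|
      ≤ ‖Gc (θ₀ : AddCircle (2*π)) - P (θ₀ : AddCircle (2*π))‖ := Complex.abs_re_le_norm _
  have h2 : ‖Gc (θ₀ : AddCircle (2*π)) - P (θ₀ : AddCircle (2*π))‖ ≤ dist Gc P := by
    rw [dist_eq_norm]
    exact ((Gc - P).norm_coe_le_norm (θ₀ : AddCircle (2*π)))
  linarith

variable {E : Type*} [NormedAddCommGroup E] [NormedSpace ℂ E]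

lemma continuous_comp_circleMapE {W : ℂ → E} (hr : 0 < r)
    (hW : ContinuousOn W (closedBall 0 r)) :
    Continuous fun θ => W (circleMap 0 r θ) := by
  apply hW.comp_continuous (continuous_circleMap 0 r)
  intro θ
  simp [mem_closedBall_zero_iff, norm_circleMap hr.le]

lemma circleMap_div (hr : 0 < r) (θ : ℝ) : circleMap 0 r θ / (r:ℂ) = circleMap 0 1 θ := by
  have h : (r:ℂ) ≠ 0 := by exact_mod_cast hr.ne'
  simp only [circleMap, zero_add, Complex.ofReal_one, one_mul]
  field_simp

lemma submean {W : ℂ → E} {R : ℝ} (hr : 0 < r) (hrR : r < R)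
    (hW : DifferentiableOn ℂ W (ball 0 R))
    (hpos : ∀ z : ℂ, ‖z‖ ≤ r → W z ≠ 0)
    (ha : ‖a‖ < r) :
    Real.log ‖W a‖ ≤ (herg (fun θ => Real.log ‖W (circleMap 0 r θ)‖) r a).re := by
  set V : ℝ → ℝ := fun θ => Real.log ‖W (circleMap 0 r θ)‖ with hV
  have hsub : closedBall (0:ℂ) r ⊆ ball 0 R := closedBall_subset_ball hrR
  have hWc : ContinuousOn W (closedBall 0 r) := hW.continuousOn.mono hsub
  have hWcirc : Continuous fun θ => W (circleMap 0 r θ) := continuous_comp_circleMapE hr hWc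
  have hWne : ∀ θ : ℝ, W (circleMap 0 r θ) ≠ 0 := fun θ =>
    hpos _ (le_of_eq (norm_circleMap hr.le θ))
  have hVcont : Continuous V :=
    hWcirc.norm.log fun θ => norm_ne_zero_iff.2 (hWne θ)
  have hVper : Function.Periodic V (2*π) := by
    intro x
    simp only [hV, periodic_circleMap 0 r x]
  apply le_of_forall_pos_le_add
  intro ε hε
  set ε' := ε/3 with hε'def
  have hε' : 0 < ε' := by positivity
  obtain ⟨Q, hQ⟩ := trig_approx hVcont hVper hε'
  set gQ : ℂ → ℂ := fun z => Q.eval (z / (r:ℂ)) with hgQ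
  have hgQd : Differentiable ℂ gQ := by
    apply (Q.differentiable).comp
    exact differentiable_id.div_const _
  set T : ℂ → ℂ := fun z => gQ z + ((2*ε' : ℝ) : ℂ) with hT
  have hTd : Differentiable ℂ T := hgQd.add_const _
  have hgQre : ∀ θ : ℝ, (gQ (circleMap 0 r θ)).re = (Q.eval (circleMap 0 1 θ)).re := by
    intro θ
    rw [hgQ]
    simp only [circleMap_div hr θ]
  have hTre : ∀ θ : ℝ, V θ ≤ (T (circleMap 0 r θ)).re := by
    intro θ
    have h1 := hQ θ
    have h2 : V θ - (Q.eval (circleMap 0 1 θ)).re ≤ ε' := (abs_le.1 h1).2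
    have : (T (circleMap 0 r θ)).re = (gQ (circleMap 0 r θ)).re + 2*ε' := by
      rw [hT]
      simp [Complex.add_re]
    rw [this, hgQre θ]
    linarith
  -- max modulus
  set F : ℂ → E := fun z => Complex.exp (-T z) • W z with hF
  have hFd : DiffContOnCl ℂ F (ball 0 r) := by
    apply DifferentiableOn.diffContOnCl
    rw [closure_ball' hr]
    exact ((Complex.differentiable_exp.comp hTd.neg).differentiableOn).smul (hW.mono hsub)
  have hbound : ∀ z ∈ frontier (ball (0:ℂ) r), ‖F z‖ ≤ 1 := by
    intro z hz
    rw [frontier_ball 0 hr.ne'] at hz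
    have hzr : z ∈ range (circleMap 0 r) := by
      rw [range_circleMap, _root_.abs_of_nonneg hr.le]
      exact hz
    obtain ⟨θ, rfl⟩ := hzr
    rw [hF]
    have hnorm : ‖Complex.exp (-T (circleMap 0 r θ)) • W (circleMap 0 r θ)‖
        = Real.exp (-(T (circleMap 0 r θ)).re) * ‖W (circleMap 0 r θ)‖ := by
      rw [norm_smul, Complex.norm_exp]
      simp
    rw [hnorm]
    have hWval : ‖W (circleMap 0 r θ)‖ = Real.exp (V θ) := by
      rw [hV, Real.exp_log (norm_pos_iff.2 (hWne θ))]
    rw [hWval, ← Real.exp_add]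
    have := hTre θ
    have : -(T (circleMap 0 r θ)).re + V θ ≤ 0 := by linarith
    calc Real.exp (-(T (circleMap 0 r θ)).re + V θ) ≤ Real.exp 0 := Real.exp_le_exp.2 this
    _ = 1 := Real.exp_zero
  have hFa : ‖F a‖ ≤ 1 := by
    apply Complex.norm_le_of_forall_mem_frontier_norm_le isBounded_ball hFd hbound
    rw [closure_ball' hr]
    exact mem_closedBall_zero_iff.2 ha.le
  have hWa : Real.log ‖W a‖ ≤ (T a).re := by
    have h1 : ‖F a‖ = Real.exp (-(T a).re) * ‖W a‖ := by
      rw [hF, norm_smul, Complex.norm_exp]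
      simp
    have h2 : ‖W a‖ ≤ Real.exp ((T a).re) := by
      rw [h1] at hFa
      have h3 : Real.exp (-(T a).re) * ‖W a‖ ≤ 1 := hFa
      have h4 : (0:ℝ) < Real.exp (-(T a).re) := Real.exp_pos _
      have h5 : Real.exp (-(T a).re) * Real.exp ((T a).re) = 1 := by
        rw [← Real.exp_add]; simp
      by_contra hcon
      push_neg at hcon
      have h6 := mul_lt_mul_of_pos_left hcon h4
      rw [h5] at h6
      linarith
    calc Real.log ‖W a‖ ≤ Real.log (Real.exp ((T a).re)) :=
      Real.log_le_log (norm_pos_iff.2 (hpos a ha.le)) h2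
    _ = (T a).re := Real.log_exp _
  -- Poisson step
  have hgQdc : DiffContOnCl ℂ gQ (ball 0 r) := hgQd.diffContOnCl
  have hrep := herg_reprod_re hr hgQdc ha
  have hgc : Continuous fun θ => (gQ (circleMap 0 r θ)).re :=
    (Complex.continuous_re.comp (contOn_circle hr hgQdc))
  have hkerc : Continuous fun θ => (ker r a θ).re :=
    Complex.continuous_re.comp (ker_cont hr ha)
  have hre1 : (herg (fun θ => (gQ (circleMap 0 r θ)).re) r a).re
      = (2*π)⁻¹ * ∫ θ in (0:ℝ)..(2*π), (gQ (circleMap 0 r θ)).re * (ker r a θ).re :=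
    herg_re hgc hr ha
  have hre2 : (herg V r a).re
      = (2*π)⁻¹ * ∫ θ in (0:ℝ)..(2*π), V θ * (ker r a θ).re :=
    herg_re hVcont hr ha
  have hre3 : (herg (fun _ => 1) r a).re
      = (2*π)⁻¹ * ∫ θ in (0:ℝ)..(2*π), 1 * (ker r a θ).re :=
    herg_re continuous_const hr ha
  have hone : (2*π)⁻¹ * ∫ θ in (0:ℝ)..(2*π), 1 * (ker r a θ).re = 1 := by
    rw [← hre3, herg_const_one hr ha]
    simp
  have hmono : ∫ θ in (0:ℝ)..(2*π), (gQ (circleMap 0 r θ)).re * (ker r a θ).re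
      ≤ ∫ θ in (0:ℝ)..(2*π), (V θ + ε') * (ker r a θ).re := by
    apply intervalIntegral.integral_mono_on Real.two_pi_pos.le
    · exact (hgc.mul hkerc).intervalIntegrable _ _
    · exact (((hVcont.add continuous_const)).mul hkerc).intervalIntegrable _ _
    · intro θ _
      apply mul_le_mul_of_nonneg_right _ (ker_re_nonneg hr ha)
      rw [hgQre θ]
      have := (abs_le.1 (hQ θ)).1
      linarith
  have hsplit : ∫ θ in (0:ℝ)..(2*π), (V θ + ε') * (ker r a θ).re
      = (∫ θ in (0:ℝ)..(2*π), V θ * (ker r a θ).re)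
        + ε' * ∫ θ in (0:ℝ)..(2*π), 1 * (ker r a θ).re := by
    rw [← intervalIntegral.integral_const_mul, ← intervalIntegral.integral_add (f := fun θ => V θ * (ker r a θ).re)
      (g := fun θ => ε' * (1 * (ker r a θ).re))
      ((hVcont.mul hkerc).intervalIntegrable _ _)
      ((continuous_const.mul (continuous_const.mul hkerc)).intervalIntegrable _ _)]
    apply intervalIntegral.integral_congr
    intro θ _
    ring
  have htotal : (gQ a).re ≤ (herg V r a).re + ε' := by
    rw [← hrep, hre1, hre2]
    have h2π : (0:ℝ) < (2*π)⁻¹ := by positivity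
    calc (2*π)⁻¹ * ∫ θ in (0:ℝ)..(2*π), (gQ (circleMap 0 r θ)).re * (ker r a θ).re
        ≤ (2*π)⁻¹ * ∫ θ in (0:ℝ)..(2*π), (V θ + ε') * (ker r a θ).re :=
          mul_le_mul_of_nonneg_left hmono h2π.le
      _ = (2*π)⁻¹ * ((∫ θ in (0:ℝ)..(2*π), V θ * (ker r a θ).re)
          + ε' * ∫ θ in (0:ℝ)..(2*π), 1 * (ker r a θ).re) := by rw [hsplit]
      _ = (2*π)⁻¹ * (∫ θ in (0:ℝ)..(2*π), V θ * (ker r a θ).re)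
          + ε' * ((2*π)⁻¹ * ∫ θ in (0:ℝ)..(2*π), 1 * (ker r a θ).re) := by ring
      _ = (2*π)⁻¹ * (∫ θ in (0:ℝ)..(2*π), V θ * (ker r a θ).re) + ε' := by rw [hone]; ring
  have hTa : (T a).re = (gQ a).re + 2*ε' := by
    rw [hT]
    simp [Complex.add_re]
  rw [hε'def] at htotal hTa
  linarith

lemma herg_diff {V : ℝ → ℝ} (hV : Continuous V) (hr : 0 < r) :
    DifferentiableOn ℂ (herg V r) (ball 0 r) := by
  intro z₀ hz₀
  apply DifferentiableAt.differentiableWithinAt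
  rw [mem_ball_zero_iff] at hz₀
  set ε : ℝ := (r - ‖z₀‖) / 2 with hεdef
  have hεpos : 0 < ε := by
    rw [hεdef]; linarith
  have hxbnd : ∀ x : ℂ, x ∈ ball z₀ ε → ‖x‖ < ‖z₀‖ + ε := by
    intro x hx
    have hxz : ‖x - z₀‖ < ε := mem_ball_iff_norm.mp hx
    have h2 := norm_sub_norm_le x z₀
    linarith
  have hxlt : ∀ x : ℂ, x ∈ ball z₀ ε → ‖x‖ < r := by
    intro x hx
    have := hxbnd x hx
    rw [hεdef] at this
    linarith
  have hζx : ∀ (x : ℂ) (θ : ℝ), x ∈ ball z₀ ε → ε ≤ ‖circleMap 0 r θ - x‖ := by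
    intro x θ hx
    have h1 := hxbnd x hx
    have h2 := norm_sub_norm_le (circleMap 0 r θ) x
    rw [norm_circleMap hr.le] at h2
    have h3 : r - (‖z₀‖ + ε) = ε := by rw [hεdef]; ring
    linarith
  set F : ℂ → ℝ → ℂ := fun x θ => (V θ : ℂ) * ker r x θ with hFdef
  set F' : ℂ → ℝ → ℂ := fun x θ => (V θ : ℂ) *
    ((1 * (circleMap 0 r θ - x) - (circleMap 0 r θ + x) * (-1)) / (circleMap 0 r θ - x) ^ 2)
    with hF'def
  set bound : ℝ → ℝ := fun θ => |V θ| * (2 * r / ε ^ 2) with hbddef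
  have key := intervalIntegral.hasDerivAt_integral_of_dominated_loc_of_deriv_le
    (F := F) (F' := F') (bound := bound) (a := (0:ℝ)) (b := 2*π) (x₀ := z₀) (μ := volume)
    (Metric.ball_mem_nhds z₀ hεpos)
    (by
      filter_upwards [Metric.ball_mem_nhds z₀ hεpos] with x hx
      exact (((Complex.continuous_ofReal.comp hV).mul
        (ker_cont hr (hxlt x hx))).aestronglyMeasurable))
    (((Complex.continuous_ofReal.comp hV).mul (ker_cont hr hz₀)).intervalIntegrable _ _)
    (by
      have hc : Continuous fun θ => F' z₀ θ := by
        apply (Complex.continuous_ofReal.comp hV).mul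
        apply Continuous.div
        · exact (continuous_const.mul ((continuous_circleMap 0 r).sub continuous_const)).sub
            (((continuous_circleMap 0 r).add continuous_const).mul continuous_const)
        · exact ((continuous_circleMap 0 r).sub continuous_const).pow 2
        · intro θ
          exact pow_ne_zero 2 (circleMap_sub_ne hr hz₀)
      exact hc.aestronglyMeasurable)
    (by
      apply MeasureTheory.ae_of_all
      intro θ _ x hx
      simp only [hF'def]
      have hnum : (1 * (circleMap 0 r θ - x) - (circleMap 0 r θ + x) * (-1))
          = 2 * circleMap 0 r θ := by ring
      rw [hnum, norm_mul, norm_div]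
      have h1 : ‖(V θ : ℂ)‖ = |V θ| := by
        rw [Complex.norm_real, Real.norm_eq_abs]
      have h2 : ‖2 * circleMap 0 r θ‖ = 2 * r := by
        rw [norm_mul, norm_circleMap hr.le]
        simp
      have h3 : ε ^ 2 ≤ ‖(circleMap 0 r θ - x) ^ 2‖ := by
        rw [norm_pow]
        exact pow_le_pow_left₀ hεpos.le (hζx x θ hx) 2
      rw [h1, h2]
      simp only [hbddef]
      apply mul_le_mul_of_nonneg_left _ (abs_nonneg _)
      apply div_le_div_of_nonneg_left (by linarith) (by positivity)
      exact h3
      )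
    ((hV.abs.mul continuous_const).intervalIntegrable _ _)
    (by
      apply MeasureTheory.ae_of_all
      intro θ _ x hx
      have hne : circleMap 0 r θ - x ≠ 0 := circleMap_sub_ne hr (hxlt x hx)
      have hd1 : HasDerivAt (fun y : ℂ => circleMap 0 r θ + y) 1 x := by
        simpa using (hasDerivAt_id x).const_add (circleMap 0 r θ)
      have hd2 : HasDerivAt (fun y : ℂ => circleMap 0 r θ - y) (-1) x := by
        simpa using (hasDerivAt_id x).const_sub (circleMap 0 r θ)
      have := (hd1.div hd2 hne).const_mul (V θ : ℂ)
      simpa [hFdef, hF'def, ker] using this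
      )
  obtain ⟨-, hderiv⟩ := key
  exact ((hderiv.const_smul ((2*π)⁻¹ : ℝ)).differentiableAt)

lemma herg_mono {u : ℂ → ℝ} {g : ℂ → ℂ} {s t : ℝ} (hs : 0 < s) (hst : s < t)
    (hu : Continuous fun θ => u (circleMap 0 s θ))
    (hg : DifferentiableOn ℂ g (ball 0 t))
    (hle : ∀ z : ℂ, ‖z‖ = s → u z ≤ (g z).re)
    {a : ℂ} (ha : ‖a‖ < s) :
    (herg (fun θ => u (circleMap 0 s θ)) s a).re ≤ (g a).re := by
  have hgdc : DiffContOnCl ℂ g (ball 0 s) := by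
    constructor
    · exact hg.mono (ball_subset_ball hst.le)
    · rw [closure_ball' hs]
      exact hg.continuousOn.mono ((closedBall_subset_ball hst))
  have hgc : Continuous fun θ => (g (circleMap 0 s θ)).re :=
    Complex.continuous_re.comp (contOn_circle hs hgdc)
  have hkerc : Continuous fun θ => (ker s a θ).re :=
    Complex.continuous_re.comp (ker_cont hs ha)
  rw [herg_re hu hs ha, ← herg_reprod_re hs hgdc ha, herg_re hgc hs ha]
  apply mul_le_mul_of_nonneg_left _ (by positivity : (0:ℝ) ≤ (2*π)⁻¹)
  apply intervalIntegral.integral_mono_on Real.two_pi_pos.le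
  · exact (hu.mul hkerc).intervalIntegrable _ _
  · exact (hgc.mul hkerc).intervalIntegrable _ _
  · intro θ _
    apply mul_le_mul_of_nonneg_right _ (ker_re_nonneg hs ha)
    exact hle _ (norm_circleMap hs.le θ)

lemma herg_cauchy_bound {Φ : ℂ → ℂ} {s ρ S : ℝ} (hρ : 0 ≤ ρ) (hρs : ρ < s) (hsS : s < S)
    (hΦ : DifferentiableOn ℂ Φ (ball 0 S))
    (hre : ∀ z ∈ ball (0:ℂ) S, 0 ≤ (Φ z).re)
    (him : (Φ 0).im = 0)
    {a : ℂ} (ha : ‖a‖ ≤ ρ) :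
    ‖Φ a‖ ≤ (s + ρ) / (s - ρ) * (Φ 0).re := by
  have hs : 0 < s := lt_of_le_of_lt hρ hρs
  have hΦdc : DiffContOnCl ℂ Φ (ball 0 s) := by
    constructor
    · exact hΦ.mono (ball_subset_ball hsS.le)
    · rw [closure_ball' hs]
      exact hΦ.continuousOn.mono (closedBall_subset_ball hsS)
  have ha' : ‖a‖ < s := lt_of_le_of_lt ha hρs
  have hΦc : Continuous fun θ => (Φ (circleMap 0 s θ)).re :=
    Complex.continuous_re.comp (contOn_circle hs hΦdc)
  have hrep := herg_reprod hs hΦdc ha'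
  rw [him] at hrep
  simp only [Complex.ofReal_zero, zero_mul, sub_zero] at hrep
  have hmean : (2*π)⁻¹ * ∫ θ in (0:ℝ)..(2*π), (Φ (circleMap 0 s θ)).re = (Φ 0).re := by
    have h0 : ‖(0:ℂ)‖ < s := by simpa using hs
    have h1 := herg_reprod_re hs hΦdc h0
    have h2 := herg_re hΦc hs h0
    rw [h2] at h1
    rw [← h1]
    congr 1
    apply intervalIntegral.integral_congr
    intro θ _
    show (Φ (circleMap 0 s θ)).re = (Φ (circleMap 0 s θ)).re * (ker s 0 θ).re
    rw [ker_zero hs]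
    simp
  set M : ℝ := (s + ρ) / (s - ρ) with hM
  have hMnn : 0 ≤ M := by
    rw [hM]
    apply div_nonneg <;> linarith
  have hwnorm : ∀ θ : ℝ, ‖((Φ (circleMap 0 s θ)).re : ℂ) * ker s a θ‖
      ≤ (Φ (circleMap 0 s θ)).re * M := by
    intro θ
    rw [norm_mul, Complex.norm_real, Real.norm_eq_abs]
    have hpos : 0 ≤ (Φ (circleMap 0 s θ)).re := by
      apply hre
      rw [mem_ball_zero_iff, norm_circleMap hs.le]
      linarith
    rw [_root_.abs_of_nonneg hpos]
    apply mul_le_mul_of_nonneg_left _ hpos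
    calc ‖ker s a θ‖ ≤ (s + ‖a‖) / (s - ‖a‖) := ker_norm_le hs ha'
      _ ≤ M := by
        rw [hM, div_le_div_iff₀ (by linarith) (by linarith)]
        nlinarith [norm_nonneg a]
  calc ‖Φ a‖ = ‖herg (fun θ => (Φ (circleMap 0 s θ)).re) s a‖ := by rw [hrep]
    _ ≤ (2*π)⁻¹ * ‖∫ θ in (0:ℝ)..(2*π), ((Φ (circleMap 0 s θ)).re : ℂ) * ker s a θ‖ := by
        rw [herg, norm_smul, Real.norm_eq_abs, _root_.abs_of_nonneg (by positivity : (0:ℝ) ≤ (2*π)⁻¹)]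
    _ ≤ (2*π)⁻¹ * ∫ θ in (0:ℝ)..(2*π), ‖((Φ (circleMap 0 s θ)).re : ℂ) * ker s a θ‖ := by
        apply mul_le_mul_of_nonneg_left _ (by positivity : (0:ℝ) ≤ (2*π)⁻¹)
        exact intervalIntegral.norm_integral_le_integral_norm Real.two_pi_pos.le
    _ ≤ (2*π)⁻¹ * ∫ θ in (0:ℝ)..(2*π), (Φ (circleMap 0 s θ)).re * M := by
        apply mul_le_mul_of_nonneg_left _ (by positivity : (0:ℝ) ≤ (2*π)⁻¹)
        apply intervalIntegral.integral_mono_on Real.two_pi_pos.le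
        · exact (((Complex.continuous_ofReal.comp hΦc).mul (ker_cont hs ha')).norm).intervalIntegrable _ _
        · exact (hΦc.mul continuous_const).intervalIntegrable _ _
        · exact fun θ _ => hwnorm θ
    _ = M * ((2*π)⁻¹ * ∫ θ in (0:ℝ)..(2*π), (Φ (circleMap 0 s θ)).re) := by
        rw [intervalIntegral.integral_mul_const]
        ring
    _ = M * (Φ 0).re := by rw [hmean]

lemma log_norm_le_max {x y : ℂ} (h : ¬(x = 0 ∧ y = 0)) :
    Real.log ‖(⟨x, y⟩ : ℂ × ℂ)‖ ≤ max (Real.log ‖x‖) (Real.log ‖y‖) ∧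
    |max (Real.log ‖x‖) (Real.log ‖y‖)| ≤ |Real.log ‖(⟨x, y⟩ : ℂ × ℂ)‖| := by
  have hnorm : ‖(⟨x, y⟩ : ℂ × ℂ)‖ = max ‖x‖ ‖y‖ := rfl
  by_cases hx : x = 0
  · have hy : y ≠ 0 := fun hy => h ⟨hx, hy⟩
    have hyp : 0 < ‖y‖ := norm_pos_iff.2 hy
    have hmax : max ‖x‖ ‖y‖ = ‖y‖ := by
      rw [hx, norm_zero]
      exact max_eq_right hyp.le
    rw [hnorm, hmax, hx, norm_zero, Real.log_zero]
    constructor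
    · exact le_max_right _ _
    · rcases le_total (Real.log ‖y‖) 0 with hc | hc
      · rw [max_eq_left hc]
        simpa using abs_nonneg _
      · rw [max_eq_right hc]
  · by_cases hy : y = 0
    · have hxp : 0 < ‖x‖ := norm_pos_iff.2 hx
      have hmax : max ‖x‖ ‖y‖ = ‖x‖ := by
        rw [hy, norm_zero]
        exact max_eq_left hxp.le
      rw [hnorm, hmax, hy, norm_zero, Real.log_zero]
      constructor
      · exact le_max_left _ _
      · rcases le_total (Real.log ‖x‖) 0 with hc | hc
        · rw [max_comm, max_eq_left hc]
          simpa using abs_nonneg _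
        · rw [max_comm, max_eq_right hc]
    · have hxp : 0 < ‖x‖ := norm_pos_iff.2 hx
      have hyp : 0 < ‖y‖ := norm_pos_iff.2 hy
      have heq : Real.log (max ‖x‖ ‖y‖) = max (Real.log ‖x‖) (Real.log ‖y‖) := by
        rcases le_total ‖x‖ ‖y‖ with hc | hc
        · rw [max_eq_right hc, max_eq_right ((Real.log_le_log_iff hxp hyp).2 hc)]
        · rw [max_eq_left hc, max_eq_left ((Real.log_le_log_iff hyp hxp).2 hc)]
      rw [hnorm, heq]
      exact ⟨le_refl _, le_refl _⟩

end NevAux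

end NevanlinnaAux

open NevAux Filter Complex intervalIntegral

/-- Nevanlinna's theorem: a meromorphic function on the unit disk with bounded Nevanlinna
characteristic is a quotient of two bounded holomorphic functions without common zeros. -/
theorem bounded_characteristic_quotient {p₀ q₀ : ℂ → ℂ}
    (hp₀ : DifferentiableOn ℂ p₀ (ball (0:ℂ) 1)) (hq₀ : DifferentiableOn ℂ q₀ (ball (0:ℂ) 1))
    (hnc : ∀ z ∈ ball (0:ℂ) 1, p₀ z ≠ 0 ∨ q₀ z ≠ 0)
    (hp₀0 : p₀ 0 = 1) (hq₀0 : q₀ 0 = 1)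
    (hT : ∃ C : ℝ, ∀ r : ℝ, 0 < r → r < 1 →
      (2 * π)⁻¹ * ∫ θ in (0:ℝ)..(2 * π),
        max (Real.log ‖p₀ (circleMap 0 r θ)‖) (Real.log ‖q₀ (circleMap 0 r θ)‖) ≤ C) :
    ∃ g h : ℂ → ℂ, DifferentiableOn ℂ g (ball (0:ℂ) 1) ∧
      DifferentiableOn ℂ h (ball (0:ℂ) 1) ∧
      (∃ C : ℝ, ∀ z ∈ ball (0:ℂ) 1, ‖g z‖ ≤ C ∧ ‖h z‖ ≤ C) ∧
      (∀ z ∈ ball (0:ℂ) 1, g z ≠ 0 ∨ h z ≠ 0) ∧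
      (∀ z ∈ ball (0:ℂ) 1, g z * q₀ z = h z * p₀ z) := by
  classical
  obtain ⟨C, hC⟩ := hT
  set W : ℂ → ℂ × ℂ := fun z => (p₀ z, q₀ z) with hWdef
  have hWd : DifferentiableOn ℂ W (ball 0 1) := hp₀.prodMk hq₀
  have hWne : ∀ z : ℂ, ‖z‖ < 1 → W z ≠ 0 := by
    intro z hz h
    obtain ⟨h1, h2⟩ := Prod.mk_eq_zero.1 h
    rcases hnc z (mem_ball_zero_iff.2 hz) with h3 | h3
    exacts [h3 h1, h3 h2]
  set v : ℂ → ℝ := fun z => Real.log ‖W z‖ with hvdef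
  -- radii
  set rn : ℕ → ℝ := fun n => 1 - 1/(n+2) with hrn
  have hfrac : ∀ n : ℕ, 0 < 1/((n:ℝ)+2) ∧ 1/((n:ℝ)+2) ≤ 1/2 := by
    intro n
    constructor
    · positivity
    · apply one_div_le_one_div_of_le (by norm_num)
      push_cast
      linarith [Nat.cast_nonneg (α := ℝ) n]
  have hrnpos : ∀ n, 0 < rn n := by
    intro n
    have := hfrac n
    rw [hrn]
    simp only
    linarith [this.2]
  have hrlt1 : ∀ n, rn n < 1 := by
    intro n
    have := hfrac n
    rw [hrn]
    simp only
    linarith [this.1]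
  have hrmono : ∀ n m : ℕ, n ≤ m → rn n ≤ rn m := by
    intro n m hnm
    rw [hrn]
    simp only
    have : 1/((m:ℝ)+2) ≤ 1/((n:ℝ)+2) := by
      apply one_div_le_one_div_of_le (by positivity)
      have : (n:ℝ) ≤ m := by exact_mod_cast hnm
      linarith
    linarith
  have hrstrict : ∀ n : ℕ, rn n < rn (n+1) := by
    intro n
    rw [hrn]
    simp only
    have h1 : 1/((n:ℝ)+1+2) < 1/((n:ℝ)+2) := by
      apply one_div_lt_one_div_of_lt (by positivity)
      linarith
    push_cast
    linarith
  have hrarch : ∀ ρ : ℝ, ρ < 1 → ∃ N : ℕ, ρ < rn N := by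
    intro ρ hρ
    obtain ⟨n, hn⟩ := exists_nat_one_div_lt (by linarith : (0:ℝ) < 1 - ρ)
    refine ⟨n, ?_⟩
    have h2 : (1:ℝ)/(n+2) ≤ 1/(n+1) := by
      apply one_div_le_one_div_of_le (by positivity)
      linarith
    rw [hrn]
    simp only
    push_cast at hn h2 ⊢
    linarith
  -- continuity on circles
  have hvC : ∀ s : ℝ, 0 < s → s < 1 → Continuous fun θ => v (circleMap 0 s θ) := by
    intro s hs hs1
    have hWc : ContinuousOn W (closedBall 0 s) :=
      hWd.continuousOn.mono (closedBall_subset_ball hs1)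
    have h1 : Continuous fun θ => W (circleMap 0 s θ) := continuous_comp_circleMapE hs hWc
    exact h1.norm.log fun θ =>
      norm_ne_zero_iff.2 (hWne _ (by rw [norm_circleMap hs.le]; exact hs1))
  -- the approximants
  set φ : ℕ → ℂ → ℂ := fun n => herg (fun θ => v (circleMap 0 (rn n) θ)) (rn n) with hφdef
  have hφd : ∀ n, DifferentiableOn ℂ (φ n) (ball 0 (rn n)) := fun n =>
    herg_diff (hvC _ (hrnpos n) (hrlt1 n)) (hrnpos n)
  have hsub : ∀ (n : ℕ) (a : ℂ), ‖a‖ < rn n → v a ≤ (φ n a).re := by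
    intro n a ha
    exact submean (hrnpos n) (hrlt1 n) hWd
      (fun z hz => hWne z (lt_of_le_of_lt hz (hrlt1 n))) ha
  have hmono : ∀ (n : ℕ) (a : ℂ), ‖a‖ < rn n → (φ n a).re ≤ (φ (n+1) a).re := by
    intro n a ha
    apply herg_mono (hrnpos n) (hrstrict n) (hvC _ (hrnpos n) (hrlt1 n)) (hφd (n+1)) ?_ ha
    intro z hz
    exact hsub (n+1) z (by rw [hz]; exact hrstrict n)
  have hmono' : ∀ n m : ℕ, n ≤ m → ∀ a : ℂ, ‖a‖ < rn n → (φ n a).re ≤ (φ m a).re := by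
    intro n m hnm
    induction m, hnm using Nat.le_induction with
    | base => exact fun a _ => le_refl _
    | succ m hm ih =>
      intro a ha
      exact (ih a ha).trans (hmono m a (lt_of_lt_of_le ha (hrmono n m hm)))
  -- the means
  set c : ℕ → ℝ := fun n => (φ n 0).re with hcdef
  have hφ0 : ∀ n, φ n 0
      = ((((2*π)⁻¹ * ∫ θ in (0:ℝ)..(2*π), v (circleMap 0 (rn n) θ)) : ℝ) : ℂ) := fun n =>
    herg_zero (hrnpos n)
  have hc0 : ∀ n, c n = (2*π)⁻¹ * ∫ θ in (0:ℝ)..(2*π), v (circleMap 0 (rn n) θ) := by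
    intro n
    rw [hcdef]
    simp only
    rw [hφ0 n, Complex.ofReal_re]
  have hcim : ∀ n, (φ n 0).im = 0 := by
    intro n
    rw [hφ0 n, Complex.ofReal_im]
  have hcmono : Monotone c :=
    monotone_nat_of_le_succ fun n => hmono n 0 (by simpa using hrnpos n)
  have hcbdd : ∀ n, c n ≤ C := by
    intro n
    have hs := hrnpos n
    have hs1 := hrlt1 n
    rw [hc0 n]
    have hCn := hC (rn n) hs hs1
    have hp1 : Continuous fun θ => p₀ (circleMap 0 (rn n) θ) :=
      continuous_comp_circleMapE hs (hp₀.continuousOn.mono (closedBall_subset_ball hs1))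
    have hq1 : Continuous fun θ => q₀ (circleMap 0 (rn n) θ) :=
      continuous_comp_circleMapE hs (hq₀.continuousOn.mono (closedBall_subset_ball hs1))
    have hWnec : ∀ θ : ℝ, ¬(p₀ (circleMap 0 (rn n) θ) = 0 ∧ q₀ (circleMap 0 (rn n) θ) = 0) := by
      intro θ h
      apply hWne (circleMap 0 (rn n) θ) (by rw [norm_circleMap hs.le]; exact hs1)
      rw [hWdef]
      exact Prod.mk_eq_zero.2 h
    obtain ⟨B, hB⟩ := isCompact_Icc.exists_bound_of_continuousOn
      (hvC (rn n) hs hs1).continuousOn (s := Icc (0:ℝ) (2*π))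
    have hmeasf : Measurable fun θ => max (Real.log ‖p₀ (circleMap 0 (rn n) θ)‖)
        (Real.log ‖q₀ (circleMap 0 (rn n) θ)‖) :=
      (Real.measurable_log.comp hp1.norm.measurable).max
        (Real.measurable_log.comp hq1.norm.measurable)
    have hint : IntervalIntegrable (fun θ => max (Real.log ‖p₀ (circleMap 0 (rn n) θ)‖)
        (Real.log ‖q₀ (circleMap 0 (rn n) θ)‖)) volume 0 (2*π) := by
      rw [intervalIntegrable_iff]
      have hconst : IntegrableOn (fun _ : ℝ => B) (Set.uIoc 0 (2*π)) volume := by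
        apply (integrableOn_const_iff (by simp)).2
        right
        rw [uIoc_of_le Real.two_pi_pos.le]
        exact measure_Ioc_lt_top
      apply MeasureTheory.Integrable.mono' hconst hmeasf.aestronglyMeasurable
      rw [ae_restrict_iff' measurableSet_uIoc]
      apply MeasureTheory.ae_of_all
      intro θ hθ
      have hθ' : θ ∈ Icc (0:ℝ) (2*π) := by
        rw [uIoc_of_le Real.two_pi_pos.le] at hθ
        exact Ioc_subset_Icc_self hθ
      have h2 := (log_norm_le_max (hWnec θ)).2
      have h3 := hB θ hθ'
      rw [Real.norm_eq_abs] at h3 ⊢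
      exact h2.trans h3
    calc (2*π)⁻¹ * ∫ θ in (0:ℝ)..(2*π), v (circleMap 0 (rn n) θ)
        ≤ (2*π)⁻¹ * ∫ θ in (0:ℝ)..(2*π), max (Real.log ‖p₀ (circleMap 0 (rn n) θ)‖)
            (Real.log ‖q₀ (circleMap 0 (rn n) θ)‖) := by
          apply mul_le_mul_of_nonneg_left _ (by positivity : (0:ℝ) ≤ (2*π)⁻¹)
          apply intervalIntegral.integral_mono_on Real.two_pi_pos.le
            ((hvC (rn n) hs hs1).intervalIntegrable _ _) hint
          intro θ _
          exact (log_norm_le_max (hWnec θ)).1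
      _ ≤ C := hCn
  -- convergence of the means
  have hcbddabove : BddAbove (Set.range c) := by
    refine ⟨C, ?_⟩
    rintro x ⟨n, rfl⟩
    exact hcbdd n
  have hccauchy : CauchySeq c := (tendsto_atTop_ciSup hcmono hcbddabove).cauchySeq
  -- uniform Cauchy on closed balls
  have hucauchy : ∀ ρ : ℝ, 0 ≤ ρ → ρ < 1 → UniformCauchySeqOn φ atTop (closedBall 0 ρ) := by
    intro ρ hρ0 hρ1
    set s : ℝ := (ρ+1)/2 with hsdef
    have hρs : ρ < s := by rw [hsdef]; linarith
    have hs1 : s < 1 := by rw [hsdef]; linarith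
    obtain ⟨N, hN⟩ := hrarch s hs1
    set M : ℝ := (s+ρ)/(s-ρ) with hMdef
    have hM0 : 0 ≤ M := by
      rw [hMdef]
      apply div_nonneg <;> linarith
    rw [Metric.uniformCauchySeqOn_iff]
    intro ε hε
    obtain ⟨N₁, hN₁⟩ := Metric.cauchySeq_iff.1 hccauchy (ε/(M+1)) (by positivity)
    have key : ∀ n m : ℕ, max N N₁ ≤ n → n ≤ m → ∀ x ∈ closedBall (0:ℂ) ρ,
        dist (φ m x) (φ n x) < ε := by
      intro n m hn hnm x hx
      have hNn : N ≤ n := le_trans (le_max_left _ _) hn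
      have hN₁n : N₁ ≤ n := le_trans (le_max_right _ _) hn
      have hsrn : s < rn n := lt_of_lt_of_le hN (hrmono N n hNn)
      have hd : DifferentiableOn ℂ (fun z => φ m z - φ n z) (ball 0 (rn n)) :=
        ((hφd m).mono (ball_subset_ball (hrmono n m hnm))).sub (hφd n)
      have hre : ∀ z ∈ ball (0:ℂ) (rn n), 0 ≤ ((fun z => φ m z - φ n z) z).re := by
        intro z hz
        rw [Complex.sub_re, sub_nonneg]
        exact hmono' n m hnm z (mem_ball_zero_iff.1 hz)
      have him : ((fun z => φ m z - φ n z) 0).im = 0 := by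
        rw [Complex.sub_im, hcim m, hcim n, sub_zero]
      have hbd := herg_cauchy_bound hρ0 hρs hsrn hd hre him (mem_closedBall_zero_iff.1 hx)
      have hre0 : ((fun z => φ m z - φ n z) 0).re = c m - c n := by
        rw [Complex.sub_re, hcdef]
      rw [hre0] at hbd
      have hcd : c m - c n < ε/(M+1) := by
        have := hN₁ m (le_trans hN₁n hnm) n hN₁n
        rw [Real.dist_eq] at this
        calc c m - c n ≤ |c m - c n| := le_abs_self _
          _ < ε/(M+1) := this
      have hcd0 : 0 ≤ c m - c n := sub_nonneg.2 (hcmono hnm)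
      rw [dist_eq_norm]
      calc ‖φ m x - φ n x‖ ≤ M * (c m - c n) := hbd
        _ ≤ M * (ε/(M+1)) := mul_le_mul_of_nonneg_left hcd.le hM0
        _ < ε := by
            rw [div_eq_inv_mul]
            have h1 : M < M + 1 := by linarith
            have h2 : (0:ℝ) < M + 1 := by linarith
            calc M * ((M+1)⁻¹ * ε) = (M / (M+1)) * ε := by ring
              _ < 1 * ε := by
                  apply mul_lt_mul_of_pos_right _ hε
                  rw [div_lt_one h2]
                  exact h1
              _ = ε := one_mul ε
    refine ⟨max N N₁, fun m hm n hn x hx => ?_⟩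
    rcases le_total n m with h | h
    · exact key n m hn h x hx
    · rw [dist_comm]
      exact key m n hm h x hx
  -- the limit function
  set φL : ℂ → ℂ := fun z => limUnder atTop (fun n => φ n z) with hφL
  have hptcauchy : ∀ z : ℂ, ‖z‖ < 1 → CauchySeq (fun n => φ n z) := by
    intro z hz
    have h := hucauchy ‖z‖ (norm_nonneg z) hz
    rw [Metric.uniformCauchySeqOn_iff] at h
    rw [Metric.cauchySeq_iff]
    intro ε hε
    obtain ⟨N, hN⟩ := h ε hε
    exact ⟨N, fun m hm n hn => hN m hm n hn z (mem_closedBall_zero_iff.2 le_rfl)⟩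
  have hpt : ∀ z : ℂ, ‖z‖ < 1 → Filter.Tendsto (fun n => φ n z) atTop (nhds (φL z)) :=
    fun z hz => (hptcauchy z hz).tendsto_limUnder
  have huconv : ∀ ρ : ℝ, 0 ≤ ρ → ρ < 1 → TendstoUniformlyOn φ φL atTop (closedBall 0 ρ) := by
    intro ρ h0 h1
    exact (hucauchy ρ h0 h1).tendstoUniformlyOn_of_tendsto
      fun x hx => hpt x (lt_of_le_of_lt (mem_closedBall_zero_iff.1 hx) h1)
  have hφLd : DifferentiableOn ℂ φL (ball 0 1) := by
    intro z hz
    rw [mem_ball_zero_iff] at hz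
    obtain ⟨N, hN⟩ := hrarch ‖z‖ hz
    have hloc : TendstoLocallyUniformlyOn φ φL atTop (ball 0 (rn N)) := by
      rw [tendstoLocallyUniformlyOn_iff_forall_isCompact isOpen_ball]
      intro K hK hKc
      rcases K.eq_empty_or_nonempty with rfl | hne
      · exact tendstoUniformlyOn_empty
      · obtain ⟨z₀, hz₀K, hz₀max⟩ := hKc.exists_isMaxOn hne continuous_norm.continuousOn
        have hz₀lt : ‖z₀‖ < rn N := mem_ball_zero_iff.1 (hK hz₀K)
        apply (huconv ‖z₀‖ (norm_nonneg _) (hz₀lt.trans (hrlt1 N))).mono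
        intro x hxK
        exact mem_closedBall_zero_iff.2 (hz₀max hxK)
    have hev : ∀ᶠ n in atTop, DifferentiableOn ℂ (φ n) (ball 0 (rn N)) := by
      filter_upwards [Filter.eventually_ge_atTop N] with n hn
      exact (hφd n).mono (ball_subset_ball (hrmono N n hn))
    have hd := hloc.differentiableOn hev isOpen_ball
    exact (hd.differentiableAt
      (isOpen_ball.mem_nhds (mem_ball_zero_iff.2 hN))).differentiableWithinAt
  have hmaj : ∀ z : ℂ, ‖z‖ < 1 → v z ≤ (φL z).re := by
    intro z hz
    obtain ⟨N, hN⟩ := hrarch ‖z‖ hz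
    have htend : Filter.Tendsto (fun n => (φ n z).re) atTop (nhds ((φL z).re)) :=
      (Complex.continuous_re.tendsto (φL z)).comp (hpt z hz)
    apply ge_of_tendsto htend
    filter_upwards [Filter.eventually_ge_atTop N] with n hn
    exact hsub n z (lt_of_lt_of_le hN (hrmono N n hn))
  -- conclusion
  refine ⟨fun z => p₀ z * Complex.exp (-φL z), fun z => q₀ z * Complex.exp (-φL z),
    hp₀.mul (hφLd.neg.cexp), hq₀.mul (hφLd.neg.cexp), ⟨1, ?_⟩, ?_, ?_⟩
  · intro z hz
    rw [mem_ball_zero_iff] at hz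
    have key : ∀ x : ℂ, ‖x‖ ≤ ‖W z‖ → ‖x * Complex.exp (-φL z)‖ ≤ 1 := by
      intro x hx
      rw [norm_mul, Complex.norm_exp]
      have h1 : ‖W z‖ = Real.exp (v z) := (Real.exp_log (norm_pos_iff.2 (hWne z hz))).symm
      have h2 : ‖x‖ ≤ Real.exp ((φL z).re) := by
        apply hx.trans
        rw [h1]
        exact Real.exp_le_exp.2 (hmaj z hz)
      calc ‖x‖ * Real.exp ((-φL z).re)
          ≤ Real.exp ((φL z).re) * Real.exp ((-φL z).re) :=
            mul_le_mul_of_nonneg_right h2 (Real.exp_pos _).le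
        _ = 1 := by rw [← Real.exp_add, Complex.neg_re]; simp
    constructor
    · exact key _ (le_max_left _ _)
    · exact key _ (le_max_right _ _)
  · intro z hz
    rcases hnc z hz with h | h
    · exact Or.inl (mul_ne_zero h (Complex.exp_ne_zero _))
    · exact Or.inr (mul_ne_zero h (Complex.exp_ne_zero _))
  · intro z hz
    ring


end
end
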